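/- arXiv:2002.10400 — 5 statements merged into one kernel-verified Lean document; each statement's English description precedes it below -/
import Mathlib

section
/- Let (σ_1,…,σ_n) be a uniformly random permutation of the multiset containing n/2 copies of +1 and n/2 copies of −1, where n ≥ 256 is a multiple of 4. Then for any i ≤ n/2, E[|∑_{p=1}^i σ_p|] ≥ √i / 32. -/
/-!
Write `X = σ_1 + ⋯ + σ_i`. Hölder's inequality gives `(E X²)³ ≤ (E|X|)² E X⁴`, so it suffices
to show `E X² ≥ i/2` and `E X⁴ ≤ 6 i²`; then `E|X| ≥ √(i/48)`.

Since `σ_p² = 1`, the powers of `X` are linear combinations of the elementary symmetric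
polynomials `e_k` of `σ_1, …, σ_i`. By exchangeability `E[∏_{u ∈ U} σ_u] = c_{#U}` depends only
on `#U`, so `E e_k = (i choose k) c_k`. Multiplying `e_{k+1}(σ_1, …, σ_n)` by the full sum
`σ_1 + ⋯ + σ_n = 0` gives `(n - k - 1) c_{k+2} = -(k + 1) c_k`, whence `c_2 = -1/(n-1)` and
`c_4 = 3/((n-1)(n-3))`.
-/

open Finset

section DoubleCounting

variable {ι M : Type*} [DecidableEq ι] [AddCommMonoid M]

theorem sum_powersetCard_succ_sum_erase (I : Finset ι) (k : ℕ) (f : Finset ι → ι → M) :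
    ∑ U ∈ I.powersetCard (k + 1), ∑ p ∈ U, f (U.erase p) p =
      ∑ V ∈ I.powersetCard k, ∑ p ∈ I \ V, f V p := by
  rw [sum_sigma', sum_sigma']
  refine sum_nbij' (fun x => ⟨x.1.erase x.2, x.2⟩) (fun x => ⟨insert x.2 x.1, x.2⟩)
    ?_ ?_ ?_ ?_ (fun _ _ => rfl)
  · rintro ⟨U, p⟩ h
    simp only [mem_sigma, mem_powersetCard, mem_sdiff] at h ⊢
    exact ⟨⟨(erase_subset _ _).trans h.1.1, by rw [card_erase_of_mem h.2, h.1.2]; rfl⟩,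
      h.1.1 h.2, notMem_erase _ _⟩
  · rintro ⟨V, p⟩ h
    simp only [mem_sigma, mem_powersetCard, mem_sdiff] at h ⊢
    exact ⟨⟨insert_subset h.2.1 h.1.1, by rw [card_insert_of_notMem h.2.2, h.1.2]⟩,
      mem_insert_self _ _⟩
  · rintro ⟨U, p⟩ h
    simp only [mem_sigma, mem_powersetCard] at h
    simp [insert_erase h.2]
  · rintro ⟨V, p⟩ h
    simp only [mem_sigma, mem_powersetCard, mem_sdiff] at h
    simp [erase_insert h.2.2]

end DoubleCounting

section SignedEsymm

variable {ι R : Type*} [CommRing R]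

theorem esymm_map_val_one (x : ι → R) (I : Finset ι) :
    (I.val.map x).esymm 1 = ∑ p ∈ I, x p := by
  simp [Finset.esymm_map_val, powersetCard_one]

theorem esymm_map_val_zero (x : ι → R) (I : Finset ι) : (I.val.map x).esymm 0 = 1 := by
  simp [Finset.esymm_map_val]

variable [DecidableEq ι]

theorem sum_mul_esymm_of_mul_self_eq_one {x : ι → R} (hx : ∀ p, x p * x p = 1)
    (I : Finset ι) (k : ℕ) :
    (∑ p ∈ I, x p) * (I.val.map x).esymm (k + 1) =
      (k + 2) * (I.val.map x).esymm (k + 2) + (#I - k) * (I.val.map x).esymm k := by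
  simp only [Finset.esymm_map_val]
  have split : ∀ U ∈ I.powersetCard (k + 1), (∑ p ∈ I, x p) * ∏ u ∈ U, x u =
      ∑ p ∈ U, ∏ u ∈ U.erase p, x u + ∑ p ∈ I \ U, ∏ u ∈ insert p U, x u := by
    intro U hU
    rw [mem_powersetCard] at hU
    rw [← sum_sdiff hU.1, add_mul, sum_mul, sum_mul, add_comm]
    congr 1
    · refine sum_congr rfl fun p hp => ?_
      rw [← mul_prod_erase U x hp, ← mul_assoc, hx, one_mul]
    · exact sum_congr rfl fun p hp => (prod_insert (mem_sdiff.1 hp).2).symm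
  rw [mul_sum, sum_congr rfl split, sum_add_distrib,
    sum_powersetCard_succ_sum_erase I k fun V _ => ∏ u ∈ V, x u,
    ← sum_powersetCard_succ_sum_erase I (k + 1) fun W p => ∏ u ∈ insert p W, x u]
  have hW : ∀ W ∈ I.powersetCard (k + 2), ∑ p ∈ W, ∏ u ∈ insert p (W.erase p), x u =
      (k + 2) * ∏ u ∈ W, x u := by
    intro W hW
    rw [sum_congr rfl fun p hp => by rw [insert_erase hp], sum_const, (mem_powersetCard.1 hW).2,
      nsmul_eq_mul]
    push_cast; ring
  have hV : ∀ V ∈ I.powersetCard k, ∑ p ∈ I \ V, ∏ u ∈ V, x u = (#I - k) * ∏ u ∈ V, x u := by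
    intro V hV
    rw [mem_powersetCard] at hV
    rw [sum_const, card_sdiff_of_subset hV.1, hV.2, nsmul_eq_mul,
      Nat.cast_sub (hV.2 ▸ card_le_card hV.1)]
  rw [sum_congr rfl hW, sum_congr rfl hV, ← mul_sum, ← mul_sum, add_comm]

theorem sq_sum_of_mul_self_eq_one {x : ι → R} (hx : ∀ p, x p * x p = 1) (I : Finset ι) :
    (∑ p ∈ I, x p) ^ 2 = #I + 2 * (I.val.map x).esymm 2 := by
  have h1 := sum_mul_esymm_of_mul_self_eq_one hx I 0
  rw [esymm_map_val_one, esymm_map_val_zero] at h1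
  push_cast at h1
  linear_combination h1

theorem pow_four_sum_of_mul_self_eq_one {x : ι → R} (hx : ∀ p, x p * x p = 1) (I : Finset ι) :
    (∑ p ∈ I, x p) ^ 4 = 3 * #I ^ 2 - 2 * #I + (12 * #I - 16) * (I.val.map x).esymm 2 +
      24 * (I.val.map x).esymm 4 := by
  have h2 := sq_sum_of_mul_self_eq_one hx I
  have h3 := sum_mul_esymm_of_mul_self_eq_one hx I 1
  have h4 := sum_mul_esymm_of_mul_self_eq_one hx I 2
  rw [esymm_map_val_one] at h3
  push_cast at h3 h4
  linear_combination ((∑ p ∈ I, x p) ^ 2 + 3 * #I - 2) * h2 + 2 * (∑ p ∈ I, x p) * h3 + 6 * h4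

end SignedEsymm

def spin (b : Bool) : ℝ := if b then 1 else -1

theorem spin_mul_self (b : Bool) : spin b * spin b = 1 := by
  cases b <;> norm_num [spin]

section Balanced

variable (ι : Type*) [Fintype ι] [DecidableEq ι]

/-- A sign vector is `σ : ι → Bool` with `true` standing for `+1`. Sums over `balancedSigns ι m`
are `#(balancedSigns ι m)` times expectations under the uniform law, so `spinCorr m U` is the
unnormalised correlation `E[∏_{u ∈ U} σ_u]`. -/
def balancedSigns (m : ℕ) : Finset (ι → Bool) :=
  univ.filter fun σ => #(univ.filter fun p => σ p = true) = m

variable {ι}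

def spinCorr (m : ℕ) (U : Finset ι) : ℝ :=
  ∑ σ ∈ balancedSigns ι m, ∏ u ∈ U, spin (σ u)

theorem spinCorr_empty (m : ℕ) : spinCorr m (∅ : Finset ι) = #(balancedSigns ι m) := by
  simp [spinCorr]

theorem comp_perm_mem_balancedSigns {m : ℕ} {σ : ι → Bool} (π : Equiv.Perm ι)
    (hσ : σ ∈ balancedSigns ι m) : σ ∘ π ∈ balancedSigns ι m := by
  simp only [balancedSigns, mem_filter, mem_univ, true_and, card_filter] at hσ ⊢
  rw [← hσ]
  exact Equiv.sum_comp π fun p => if σ p = true then 1 else 0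

theorem spinCorr_image_perm (m : ℕ) (π : Equiv.Perm ι) (U : Finset ι) :
    spinCorr m (U.image π) = spinCorr m U := by
  unfold spinCorr
  refine sum_nbij' (· ∘ π) (· ∘ π.symm) (fun σ hσ => comp_perm_mem_balancedSigns π hσ)
    (fun σ hσ => comp_perm_mem_balancedSigns π.symm hσ) (fun σ _ => ?_) (fun σ _ => ?_) ?_
  · ext p; simp
  · ext p; simp
  · intro σ _
    rw [prod_image π.injective.injOn]
    rfl

theorem spinCorr_eq_of_card_eq (m : ℕ) {U V : Finset ι} (h : #U = #V) :
    spinCorr m U = spinCorr m V := by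
  obtain ⟨π, hπ⟩ := (Set.powersetCard.isPretransitive (α := ι)).exists_smul_eq
    (⟨U, rfl⟩ : Set.powersetCard ι #U) ⟨V, h.symm⟩
  have hV : U.image π = V := congrArg Subtype.val hπ
  rw [← hV, spinCorr_image_perm]

theorem sum_esymm_spin_eq (m : ℕ) (I U : Finset ι) :
    ∑ σ ∈ balancedSigns ι m, (I.val.map fun p => spin (σ p)).esymm #U =
      (#I).choose #U * spinCorr m U := by
  simp only [Finset.esymm_map_val]
  rw [sum_comm]
  have h : ∀ V ∈ I.powersetCard #U, ∑ σ ∈ balancedSigns ι m, ∏ u ∈ V, spin (σ u) = spinCorr m U :=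
    fun V hV => spinCorr_eq_of_card_eq m (mem_powersetCard.1 hV).2
  rw [sum_congr rfl h, sum_const, card_powersetCard, nsmul_eq_mul]

theorem sum_spin_eq_zero {m : ℕ} (hm : 2 * m = Fintype.card ι) {σ : ι → Bool}
    (hσ : σ ∈ balancedSigns ι m) : ∑ p, spin (σ p) = 0 := by
  have h : ∀ p, spin (σ p) = 2 * (if σ p = true then 1 else 0) - 1 := by
    intro p; cases σ p <;> norm_num [spin]
  simp only [balancedSigns, mem_filter, mem_univ, true_and] at hσ
  rw [sum_congr rfl fun p _ => h p, sum_sub_distrib, ← mul_sum, sum_boole, hσ, sum_const,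
    card_univ, nsmul_eq_mul, ← hm]
  push_cast; ring

theorem spinCorr_recursion {m k : ℕ} (hm : 2 * m = Fintype.card ι) {U W : Finset ι}
    (hU : #U = k) (hW : #W = k + 2) :
    ((Fintype.card ι : ℝ) - k - 1) * spinCorr m W + (k + 1) * spinCorr m U = 0 := by
  set n := Fintype.card ι
  have hkn : k + 2 ≤ n := hW ▸ card_le_univ W
  -- `e_{k+1}` of all the signs, multiplied by their vanishing total.
  have key : ∑ σ ∈ balancedSigns ι m,
      (∑ p, spin (σ p)) * (univ.val.map fun p => spin (σ p)).esymm (k + 1) = 0 :=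
    sum_eq_zero fun σ hσ => by rw [sum_spin_eq_zero hm hσ, zero_mul]
  have eW := sum_esymm_spin_eq m univ W
  have eU := sum_esymm_spin_eq m univ U
  rw [hW, card_univ] at eW
  rw [hU, card_univ] at eU
  simp only [sum_mul_esymm_of_mul_self_eq_one (fun p => spin_mul_self _), sum_add_distrib,
    ← mul_sum, eW, eU, card_univ] at key
  have c1 : ((n.choose (k + 2) : ℕ) : ℝ) * (k + 2) = n.choose (k + 1) * (n - k - 1) := by
    have := Nat.choose_succ_right_eq n (k + 1)
    rw [← Nat.cast_inj (R := ℝ)] at this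
    push_cast [Nat.cast_sub (by omega : k + 1 ≤ n)] at this
    linear_combination this
  have c2 : ((n.choose k : ℕ) : ℝ) * (n - k) = n.choose (k + 1) * (k + 1) := by
    have := Nat.choose_succ_right_eq n k
    rw [← Nat.cast_inj (R := ℝ)] at this
    push_cast [Nat.cast_sub (by omega : k ≤ n)] at this
    linear_combination -this
  have hpos : (0 : ℝ) < n.choose (k + 1) := by exact_mod_cast Nat.choose_pos (by omega)
  have : (n.choose (k + 1) : ℝ) *
      (((n : ℝ) - k - 1) * spinCorr m W + (k + 1) * spinCorr m U) = 0 := by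
    linear_combination key - spinCorr m W * c1 - spinCorr m U * c2
  exact (mul_eq_zero.1 this).resolve_left hpos.ne'

theorem spinCorr_of_card_two {m : ℕ} (hm : 2 * m = Fintype.card ι) {U : Finset ι} (hU : #U = 2) :
    spinCorr m U * (Fintype.card ι - 1) = -#(balancedSigns ι m) := by
  have h := spinCorr_recursion hm (card_empty (α := ι)) hU
  rw [spinCorr_empty] at h
  push_cast at h
  linear_combination h

theorem spinCorr_of_card_four {m : ℕ} (hm : 2 * m = Fintype.card ι) {U : Finset ι} (hU : #U = 4) :
    spinCorr m U * ((Fintype.card ι - 1) * (Fintype.card ι - 3)) = 3 * #(balancedSigns ι m) := by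
  obtain ⟨V, -, hV⟩ := exists_subset_card_eq (s := U) (n := 2) (by omega)
  have h := spinCorr_recursion hm hV hU
  have h2 := spinCorr_of_card_two hm hV
  push_cast at h
  linear_combination (Fintype.card ι - 1 : ℝ) * h - 3 * h2

theorem balancedSigns_nonempty {m : ℕ} (hm : m ≤ Fintype.card ι) :
    (balancedSigns ι m).Nonempty := by
  obtain ⟨T, -, hT⟩ := exists_subset_card_eq (s := (univ : Finset ι)) hm
  exact ⟨fun p => decide (p ∈ T), by simpa [balancedSigns] using hT⟩

theorem sum_sq_sum_spin_ge {m : ℕ} (hm : 2 * m = Fintype.card ι) (I : Finset ι) (hI : #I ≤ m) :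
    #I * #(balancedSigns ι m) / 2 ≤
      ∑ σ ∈ balancedSigns ι m, (∑ p ∈ I, spin (σ p)) ^ 2 := by
  rcases Nat.eq_zero_or_pos #I with hI0 | hI0
  · rw [hI0, Nat.cast_zero, zero_mul, zero_div]
    exact sum_nonneg fun σ _ => sq_nonneg _
  obtain ⟨U, -, hU⟩ := exists_subset_card_eq (s := (univ : Finset ι)) (n := 2) (by simp; omega)
  have hc := spinCorr_of_card_two hm hU
  have hE := sum_esymm_spin_eq m I U
  rw [hU] at hE
  simp only [sq_sum_of_mul_self_eq_one (fun p => spin_mul_self _)]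
  rw [sum_add_distrib, sum_const, nsmul_eq_mul, ← mul_sum, hE, Nat.cast_choose_two]
  have hn : (2 * #I : ℝ) ≤ Fintype.card ι := by
    rw [← hm]; exact_mod_cast (by omega : 2 * #I ≤ 2 * m)
  have hi : (1 : ℝ) ≤ #I := by exact_mod_cast hI0
  have e : (#I * (#I - 1) * spinCorr m U + #I * #(balancedSigns ι m) / 2) * (Fintype.card ι - 1) =
      #I * #(balancedSigns ι m) * (Fintype.card ι + 1 - 2 * #I) / 2 := by
    linear_combination (#I * (#I - 1) : ℝ) * hc
  have : 0 ≤ #I * (#I - 1) * spinCorr m U + #I * #(balancedSigns ι m) / 2 := by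
    refine (mul_nonneg_iff_of_pos_right (by linarith : (0 : ℝ) < Fintype.card ι - 1)).1 ?_
    rw [e]
    have : (0 : ℝ) ≤ Fintype.card ι + 1 - 2 * #I := by linarith
    positivity
  linarith

theorem sum_pow_four_sum_spin_le {m : ℕ} (hm : 2 * m = Fintype.card ι) (h6 : 6 ≤ Fintype.card ι)
    (I : Finset ι) (hI : #I ≤ m) :
    ∑ σ ∈ balancedSigns ι m, (∑ p ∈ I, spin (σ p)) ^ 4 ≤ 6 * #I ^ 2 * #(balancedSigns ι m) := by
  obtain ⟨U, -, hU⟩ := exists_subset_card_eq (s := (univ : Finset ι)) (n := 2) (by simp; omega)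
  obtain ⟨V, -, hV⟩ := exists_subset_card_eq (s := (univ : Finset ι)) (n := 4) (by simp; omega)
  have hcU := spinCorr_of_card_two hm hU
  have hcV := spinCorr_of_card_four hm hV
  have hEU := sum_esymm_spin_eq m I U
  have hEV := sum_esymm_spin_eq m I V
  rw [hU] at hEU
  rw [hV] at hEV
  simp only [pow_four_sum_of_mul_self_eq_one (fun p => spin_mul_self _)]
  rw [sum_add_distrib, sum_add_distrib, sum_const, nsmul_eq_mul, ← mul_sum, ← mul_sum, hEU, hEV]
  set n : ℝ := (Fintype.card ι : ℝ)
  set i : ℝ := (#I : ℝ)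
  set N : ℝ := (#(balancedSigns ι m) : ℝ)
  have hn : 6 ≤ n := by simp only [n]; exact_mod_cast h6
  have hin : 2 * i ≤ n := by
    simp only [i, n, ← hm]; exact_mod_cast (by omega : 2 * #I ≤ 2 * m)
  have hi : 0 ≤ i := Nat.cast_nonneg _
  have hN : 0 ≤ N := Nat.cast_nonneg _
  have hD : 0 < (n - 1) * (n - 3) := by nlinarith
  have hcU_nonpos : spinCorr m U ≤ 0 := by nlinarith
  have hcV_nonneg : 0 ≤ spinCorr m V := by nlinarith
  have hchoose2 : 0 ≤ (12 * i - 16) * (#I).choose 2 := by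
    rcases Nat.lt_or_ge #I 2 with h | h
    · simp [Nat.choose_eq_zero_of_lt h]
    · have : (2 : ℝ) ≤ i := by simp only [i]; exact_mod_cast h
      have : (0 : ℝ) ≤ (#I).choose 2 := Nat.cast_nonneg _
      nlinarith
  have hchoose4 : 24 * ((#I).choose 4 : ℝ) ≤ i ^ 4 := by
    have := Nat.choose_le_pow_div (α := ℝ) 4 #I
    norm_num [Nat.factorial] at this
    linarith
  have hiD : i ^ 2 ≤ (n - 1) * (n - 3) := by nlinarith
  have hV4 : i ^ 4 * spinCorr m V ≤ 3 * i ^ 2 * N := by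
    have : i ^ 4 * spinCorr m V * ((n - 1) * (n - 3)) ≤ 3 * i ^ 2 * N * ((n - 1) * (n - 3)) := by
      rw [mul_assoc, hcV]
      nlinarith [mul_le_mul_of_nonneg_left hiD (by positivity : 0 ≤ 3 * i ^ 2 * N)]
    exact le_of_mul_le_mul_right this hD
  nlinarith [mul_nonpos_of_nonneg_of_nonpos hchoose2 hcU_nonpos,
    mul_le_mul_of_nonneg_right hchoose4 hcV_nonneg]

end Balanced

section MomentMethod

variable {α : Type*}

theorem sum_sq_pow_three_le (s : Finset α) (X : α → ℝ) :
    (∑ a ∈ s, X a ^ 2) ^ 3 ≤ (∑ a ∈ s, |X a|) ^ 2 * ∑ a ∈ s, X a ^ 4 := by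
  set A₁ := ∑ a ∈ s, |X a|
  set A₂ := ∑ a ∈ s, X a ^ 2
  set A₃ := ∑ a ∈ s, |X a| ^ 3
  set A₄ := ∑ a ∈ s, X a ^ 4
  have h13 : A₂ ^ 2 ≤ A₁ * A₃ :=
    sum_sq_le_sum_mul_sum_of_sq_le_mul s (fun a _ => abs_nonneg _)
      (fun a _ => pow_nonneg (abs_nonneg _) 3) fun a _ => le_of_eq (by rw [← sq_abs (X a)]; ring)
  have h24 : A₃ ^ 2 ≤ A₂ * A₄ :=
    sum_sq_le_sum_mul_sum_of_sq_le_mul s (fun a _ => sq_nonneg _)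
      (fun a _ => by positivity) fun a _ =>
        le_of_eq (by rw [show X a ^ 4 = (X a ^ 2) ^ 2 by ring, ← sq_abs (X a)]; ring)
  have hA₂ : 0 ≤ A₂ := sum_nonneg fun a _ => sq_nonneg (X a)
  rcases hA₂.eq_or_lt with h0 | hpos
  · rw [← h0, zero_pow three_ne_zero]
    exact mul_nonneg (sq_nonneg _) (sum_nonneg fun a _ => by positivity)
  refine le_of_mul_le_mul_left ?_ hpos
  calc A₂ * A₂ ^ 3 = (A₂ ^ 2) ^ 2 := by ring
    _ ≤ (A₁ * A₃) ^ 2 := pow_le_pow_left₀ (sq_nonneg _) h13 2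
    _ = A₁ ^ 2 * A₃ ^ 2 := by ring
    _ ≤ A₁ ^ 2 * (A₂ * A₄) := mul_le_mul_of_nonneg_left h24 (sq_nonneg _)
    _ = A₂ * (A₁ ^ 2 * A₄) := by ring

theorem sqrt_mul_le_sum_abs_of_moments {s : Finset α} {X : α → ℝ} {a N : ℝ} (ha : 0 ≤ a)
    (hN : 0 < N) (h2 : a * N / 2 ≤ ∑ x ∈ s, X x ^ 2) (h4 : ∑ x ∈ s, X x ^ 4 ≤ 6 * a ^ 2 * N) :
    √a / 32 * N ≤ ∑ x ∈ s, |X x| := by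
  set A₁ := ∑ x ∈ s, |X x|
  have hA₁ : 0 ≤ A₁ := sum_nonneg fun x _ => abs_nonneg _
  have hchain : (a * N / 2) ^ 3 ≤ A₁ ^ 2 * (6 * a ^ 2 * N) :=
    (pow_le_pow_left₀ (by positivity) h2 3).trans <|
      (sum_sq_pow_three_le s X).trans (mul_le_mul_of_nonneg_left h4 (sq_nonneg _))
  have hsq : a * N ^ 2 ≤ 48 * A₁ ^ 2 := by
    rcases ha.eq_or_lt with rfl | ha
    · rw [zero_mul]; positivity
    · refine le_of_mul_le_mul_left ?_ (by positivity : 0 < a ^ 2 * N / 8)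
      linear_combination hchain
  refine (pow_le_pow_iff_left₀ (by positivity) hA₁ two_ne_zero).1 ?_
  rw [mul_pow, div_pow, Real.sq_sqrt ha]
  nlinarith

end MomentMethod

/-- n ≥ 256 multiple of 4, i ≤ n/2: E[|∑_{p=1}^i σ_p|] ≥ √i / 32. -/
theorem stmt_1 (n : ℕ) (hn : 4 ∣ n) (hn256 : 256 ≤ n) (i : ℕ) (hi : i ≤ n / 2) :
    let S : Finset (Fin n → Bool) :=
      univ.filter (fun σ => (univ.filter (fun p => σ p = true)).card = n / 2)
    (∑ σ ∈ S, |∑ p ∈ univ.filter (fun p : Fin n => (p : ℕ) < i),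
        (if σ p then (1 : ℝ) else -1)|) / (S.card : ℝ) ≥ Real.sqrt i / 32 := by
  intro S
  have hm : 2 * (n / 2) = Fintype.card (Fin n) := by rw [Fintype.card_fin]; omega
  have hI : #(univ.filter fun p : Fin n => (p : ℕ) < i) = i := by
    rw [Fin.card_filter_val_lt]; omega
  have hN : (0 : ℝ) < #S := by
    exact_mod_cast (balancedSigns_nonempty (ι := Fin n) (by simp; omega)).card_pos
  rw [ge_iff_le, le_div_iff₀ hN]
  refine sqrt_mul_le_sum_abs_of_moments (Nat.cast_nonneg i) hN ?_ ?_
  · have := sum_sq_sum_spin_ge hm _ (hI ▸ hi)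
    rwa [hI] at this
  · have := sum_pow_four_sum_spin_le hm (by simp; omega) _ (hI ▸ hi)
    rwa [hI] at this
end

section
/- Let (σ_1,…,σ_n) be a uniformly random permutation of the multiset with n/2 copies of +1 and n/2 copies of −1, where n ≥ 256 is a multiple of 4. Then for any i with n/4 ≤ i ≤ n/2, both P(∑_{p=1}^i σ_p < 0) ≥ 1/4 and P(∑_{p=1}^i σ_p > 0) ≥ 1/4. -/
/-!
Flipping every sign is an involution of the balanced sign vectors that negates the partial sum,
so `P(s_i < 0) = P(s_i > 0)` and it suffices to show `P(s_i = 0) ≤ 1/2`. This is clear for odd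
`i`. For `i = 2k` and `M = n/2 - k`, the number of balanced vectors with exactly `j` pluses among
the first `i` positions is `C(2k, j) C(2M, k + M - j)`; since `(k + 1)(M + 1) ≤ 2kM` the count for
`j = k` is at most the sum of those for `j = k - 1` and `j = k + 1`, and the three events are
disjoint.
-/
open Finset

theorem Nat.choose_mul_choose_le_two_mul_choose_succ_mul_choose_succ {k M : ℕ}
    (h : k + M + 1 ≤ k * M) :
    (2 * k).choose k * (2 * M).choose M
      ≤ 2 * ((2 * k).choose (k + 1) * (2 * M).choose (M + 1)) := by
  have hk : (2 * k).choose (k + 1) * (k + 1) = (2 * k).choose k * k := by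
    rw [Nat.choose_succ_right_eq, two_mul, Nat.add_sub_cancel]
  have hM : (2 * M).choose (M + 1) * (M + 1) = (2 * M).choose M * M := by
    rw [Nat.choose_succ_right_eq, two_mul, Nat.add_sub_cancel]
  refine Nat.le_of_mul_le_mul_right (c := (k + 1) * (M + 1)) ?_ (by positivity)
  calc (2 * k).choose k * (2 * M).choose M * ((k + 1) * (M + 1))
      ≤ (2 * k).choose k * (2 * M).choose M * (2 * (k * M)) :=
          Nat.mul_le_mul_left _ (by nlinarith)
    _ = 2 * ((2 * k).choose (k + 1) * (k + 1) * ((2 * M).choose (M + 1) * (M + 1))) := by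
        rw [hk, hM]; ring
    _ = _ := by ring

theorem Finset.card_filter_neg_add_card_filter_zero_add_card_filter_pos {ι : Type*}
    (s : Finset ι) (f : ι → ℤ) :
    #{x ∈ s | f x < 0} + #{x ∈ s | f x = 0} + #{x ∈ s | 0 < f x} = #s := by
  classical
  rw [← card_union_of_disjoint (disjoint_filter.2 fun _ _ h h' => by omega),
    ← card_union_of_disjoint (disjoint_union_left.2 ⟨disjoint_filter.2 fun _ _ h h' => by omega,
      disjoint_filter.2 fun _ _ h h' => by omega⟩), ← filter_or, ← filter_or,
    filter_true_of_mem fun x _ => by omega]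

section

variable {α : Type*} [Fintype α] [DecidableEq α]

variable (α) in
def boolSlice (m : ℕ) : Finset (α → Bool) := {σ | #{p | σ p} = m}

def signSum (I : Finset α) (σ : α → Bool) : ℤ := ∑ p ∈ I, if σ p then 1 else -1

theorem mem_boolSlice {m : ℕ} {σ : α → Bool} : σ ∈ boolSlice α m ↔ #{p | σ p} = m := by
  simp [boolSlice]

theorem card_filter_add_card_filter_compl (I : Finset α) (P : α → Prop) [DecidablePred P] :
    #{p ∈ I | P p} + #{p ∈ Iᶜ | P p} = #{p | P p} := by
  simp only [card_filter]
  exact sum_add_sum_compl I _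

omit [Fintype α] [DecidableEq α] in
theorem signSum_eq (I : Finset α) (σ : α → Bool) :
    signSum I σ = 2 * #{p ∈ I | σ p} - #I := by
  rw [signSum, card_filter, card_eq_sum_ones, Nat.cast_sum, Nat.cast_sum, mul_sum,
    ← sum_sub_distrib]
  refine sum_congr rfl fun p _ => ?_
  cases σ p <;> norm_num

omit [Fintype α] [DecidableEq α] in
theorem signSum_not (I : Finset α) (σ : α → Bool) :
    signSum I (fun p => !σ p) = -signSum I σ := by
  rw [signSum, signSum, ← sum_neg_distrib]
  refine sum_congr rfl fun p _ => ?_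
  cases σ p <;> rfl

theorem card_filter_boolSlice_card_filter_eq (I : Finset α) {m j : ℕ} (hj : j ≤ m) :
    #{σ ∈ boolSlice α m | #{p ∈ I | σ p} = j} = (#I).choose j * (#Iᶜ).choose (m - j) := by
  have split (A B : Finset α) (hA : A ⊆ I) (hB : B ⊆ Iᶜ) :
      {p ∈ I | p ∈ A ∪ B} = A ∧ {p ∈ Iᶜ | p ∈ A ∪ B} = B := by
    constructor <;> ext p <;> simp only [mem_filter, mem_union] <;>
      constructor <;> grind [mem_compl]
  rw [← card_powersetCard j I, ← card_powersetCard (m - j) Iᶜ, ← card_product]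
  refine card_nbij' (fun σ => ({p ∈ I | σ p}, {p ∈ Iᶜ | σ p}))
    (fun AB p => decide (p ∈ AB.1 ∪ AB.2)) ?_ ?_ ?_ ?_
  · intro σ hσ
    simp only [coe_filter, Set.mem_ofPred_eq, mem_boolSlice, mem_coe, mem_product,
      mem_powersetCard, filter_subset, true_and] at hσ ⊢
    have := card_filter_add_card_filter_compl I (fun p => σ p)
    omega
  · rintro ⟨A, B⟩ hAB
    simp only [mem_coe, mem_product, mem_powersetCard] at hAB
    obtain ⟨⟨hA, rfl⟩, hB, hBcard⟩ := hAB
    simp only [coe_filter, Set.mem_ofPred_eq, mem_boolSlice, decide_eq_true_eq,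
      (split A B hA hB).1, and_true]
    rw [filter_mem_eq_inter, univ_inter, card_union_of_disjoint
      (disjoint_of_subset_left hA (disjoint_of_subset_right hB disjoint_compl_right)), hBcard]
    omega
  · intro σ _
    funext p
    by_cases hp : p ∈ I <;> cases h : σ p <;> simp [hp, h]
  · rintro ⟨A, B⟩ hAB
    simp only [mem_coe, mem_product, mem_powersetCard] at hAB
    simpa only [decide_eq_true_eq, Prod.mk.injEq] using split A B hAB.1.1 hAB.2.1

theorem card_boolSlice (m : ℕ) : #(boolSlice α m) = (Fintype.card α).choose m := by
  have h := card_filter_boolSlice_card_filter_eq (∅ : Finset α) (Nat.zero_le m)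
  rwa [filter_true_of_mem (fun σ _ => by simp), card_empty, Nat.choose_zero_right, one_mul,
    compl_empty, card_univ, Nat.sub_zero] at h

theorem mem_boolSlice_not_iff {m : ℕ} (hα : Fintype.card α = 2 * m) {σ : α → Bool} :
    (fun p => !σ p) ∈ boolSlice α m ↔ σ ∈ boolSlice α m := by
  have h := card_filter_add_card_filter_not (s := univ) (p := fun p => σ p = true)
  simp only [Bool.not_eq_true, card_univ] at h
  simp only [mem_boolSlice, Bool.not_eq_true']
  omega

theorem card_filter_signSum_neg_eq_card_filter_signSum_pos (I : Finset α) {m : ℕ}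
    (hα : Fintype.card α = 2 * m) :
    #{σ ∈ boolSlice α m | signSum I σ < 0} = #{σ ∈ boolSlice α m | 0 < signSum I σ} := by
  refine card_nbij' (fun σ p => !σ p) (fun σ p => !σ p) ?_ ?_ ?_ ?_ <;>
    intro σ hσ <;>
    simp only [coe_filter, Set.mem_ofPred_eq, mem_boolSlice_not_iff hα, signSum_not,
      Bool.not_not] at hσ ⊢
  · exact ⟨hσ.1, by linarith⟩
  · exact ⟨hσ.1, by linarith⟩

theorem two_mul_card_filter_signSum_eq_zero_le (I : Finset α) {k M : ℕ} (hI : #I = 2 * k)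
    (hIc : #Iᶜ = 2 * M) (hkM : k + M + 1 ≤ k * M) :
    2 * #{σ ∈ boolSlice α (k + M) | signSum I σ = 0} ≤ #(boolSlice α (k + M)) := by
  set S := boolSlice α (k + M)
  set N : ℕ → ℕ := fun j => #{σ ∈ S | #{p ∈ I | σ p} = j}
  have hk : 1 ≤ k := by nlinarith
  have hM : 1 ≤ M := by nlinarith
  have hzero : #{σ ∈ S | signSum I σ = 0} = N k := by
    refine congrArg card (filter_congr fun σ _ => ?_)
    rw [signSum_eq, hI]
    omega
  have hN (j : ℕ) (hj : j ≤ k + M) : N j = (2 * k).choose j * (2 * M).choose (k + M - j) := by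
    rw [← hI, ← hIc]
    exact card_filter_boolSlice_card_filter_eq I hj
  have hfibers : N (k - 1) + N k + N (k + 1) ≤ #S := by
    have h := sum_card_fiberwise_eq_card_filter S {k - 1, k, k + 1} (fun σ => #{p ∈ I | σ p})
    rw [sum_insert (by simp; omega), sum_insert (by simp), sum_singleton] at h
    change N (k - 1) + (N k + N (k + 1)) = _ at h
    have := card_filter_le S (fun σ => #{p ∈ I | σ p} ∈ ({k - 1, k, k + 1} : Finset ℕ))
    omega
  have hsides : N (k - 1) = N (k + 1) := by
    rw [hN _ (by omega), hN _ (by omega), show k + M - (k - 1) = M + 1 by omega,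
      show k + M - (k + 1) = M - 1 by omega, Nat.choose_symm_of_eq_add (n := 2 * M) (a := M - 1)
      (b := M + 1) (by omega), Nat.choose_symm_of_eq_add (n := 2 * k) (a := k - 1) (b := k + 1)
      (by omega)]
  have hcenter : N k ≤ 2 * N (k + 1) := by
    rw [hN _ (by omega), hN _ (by omega), show k + M - k = M by omega,
      show k + M - (k + 1) = M - 1 by omega, Nat.choose_symm_of_eq_add (n := 2 * M) (a := M - 1)
      (b := M + 1) (by omega)]
    exact Nat.choose_mul_choose_le_two_mul_choose_succ_mul_choose_succ hkM
  omega

end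

/-- for n/4 ≤ i ≤ n/2, P(s_i < 0) ≥ 1/4 and P(s_i > 0) ≥ 1/4. -/
theorem stmt_3 (n : ℕ) (hn : 4 ∣ n) (hn256 : 256 ≤ n) (i : ℕ)
    (hi1 : n / 4 ≤ i) (hi2 : i ≤ n / 2) :
    let S : Finset (Fin n → Bool) :=
      univ.filter (fun σ => (univ.filter (fun p => σ p = true)).card = n / 2)
    let s : (Fin n → Bool) → ℤ := fun σ =>
      ∑ p ∈ univ.filter (fun p : Fin n => (p : ℕ) < i), (if σ p then (1 : ℤ) else -1)
    ((S.filter (fun σ => s σ < 0)).card : ℝ) / (S.card : ℝ) ≥ 1 / 4 ∧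
    ((S.filter (fun σ => 0 < s σ)).card : ℝ) / (S.card : ℝ) ≥ 1 / 4 := by
  intro S s
  set I : Finset (Fin n) := {p | (p : ℕ) < i}
  have hS : S = boolSlice (Fin n) (n / 2) := rfl
  have hs : s = signSum I := rfl
  have hI : #I = i := by rw [Fin.card_filter_val_lt]; omega
  have hIc : #Iᶜ = n - i := by rw [card_compl, Fintype.card_fin, hI]
  have hsymm : #{σ ∈ S | s σ < 0} = #{σ ∈ S | 0 < s σ} := by
    rw [hS, hs]
    exact card_filter_signSum_neg_eq_card_filter_signSum_pos I (by simp; omega)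
  have hzero : 2 * #{σ ∈ S | s σ = 0} ≤ #S := by
    rcases Nat.even_or_odd i with ⟨k, hk⟩ | ⟨k, hk⟩
    · obtain ⟨M, hM⟩ : ∃ M, n / 2 = k + M := ⟨n / 2 - k, by omega⟩
      rw [hS, hs, hM]
      have hk3 : 3 ≤ k := by omega
      have hM3 : 3 ≤ M := by omega
      exact two_mul_card_filter_signSum_eq_zero_le I (by omega) (by omega) (by nlinarith)
    · rw [filter_false_of_mem fun σ _ => by rw [hs, signSum_eq, hI]; omega, card_empty]
      exact Nat.zero_le _
  have hSpos : 0 < #S := by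
    rw [hS, card_boolSlice, Fintype.card_fin]
    exact Nat.choose_pos (Nat.div_le_self n 2)
  have hsplit := card_filter_neg_add_card_filter_zero_add_card_filter_pos S s
  have hneg : (#S : ℝ) ≤ 4 * #{σ ∈ S | s σ < 0} := by exact_mod_cast (by omega)
  have hpos : (#S : ℝ) ≤ 4 * #{σ ∈ S | 0 < s σ} := by exact_mod_cast (by omega)
  constructor <;> rw [ge_iff_le, le_div_iff₀ (by positivity)] <;> linarith
end

section
/- Let (σ_1,…,σ_n) be a uniformly random permutation of the multiset with n/2 copies of +1 and n/2 copies of −1 (n even), and let s_i = ∑_{p=1}^i σ_p. Then for any i ≤ n, E[|s_i|] satisfies the recursion E[|s_i|] = E[|s_{i−1}|]·(1 − 1/(n−i+1)) + P(s_{i−1} = 0). -/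
/-!
Swapping position `i` with any later position `q` preserves the set of balanced strings and
the first `i - 1` entries, so `∑ |s_i|` equals `∑ |s_{i-1} + σ_q|` for each of the `n - i + 1`
positions `q ≥ i`. For a fixed balanced `σ`, the entries `σ_q` with `q ≥ i` sum to `-s_{i-1}`;
since each is `±1` and `s_{i-1}` is a nonzero integer or zero, `|s_{i-1} + σ_q|` is
`|s_{i-1}| + sign(s_{i-1}) σ_q` in the first case and `1` in the second, so summing over `q`
gives `(n - i) |s_{i-1}| + (n - i + 1) [s_{i-1} = 0]`.
-/

open Finset

def boolSign (b : Bool) : ℝ := if b then 1 else -1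

lemma abs_boolSign (b : Bool) : |boolSign b| = 1 := by
  cases b <;> simp [boolSign]

lemma sum_abs_add_of_sum_eq_neg {ι : Type*} (T : Finset ι) (t : ι → ℝ)
    (ht : ∀ q ∈ T, |t q| = 1) {x : ℝ} (hx : x = 0 ∨ 1 ≤ |x|) (hsum : ∑ q ∈ T, t q = -x) :
    ∑ q ∈ T, |x + t q| = (#T - 1) * |x| + if x = 0 then (#T : ℝ) else 0 := by
  rcases hx with rfl | hx
  · simp [sum_congr rfl ht]
  have hx0 : x ≠ 0 := by rintro rfl; norm_num at hx
  rw [if_neg hx0, add_zero]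
  rcases le_abs'.mp hx with hneg | hpos
  · have hterm : ∀ q ∈ T, |x + t q| = -(x + t q) := fun q hq =>
      abs_of_nonpos (by linarith [le_abs_self (t q), ht q hq])
    rw [sum_congr rfl hterm, sum_neg_distrib, sum_add_distrib, hsum, sum_const, nsmul_eq_mul,
      abs_of_neg (by linarith)]
    ring
  · have hterm : ∀ q ∈ T, |x + t q| = x + t q := fun q hq =>
      abs_of_nonneg (by linarith [neg_abs_le (t q), ht q hq])
    rw [sum_congr rfl hterm, sum_add_distrib, hsum, sum_const, nsmul_eq_mul,
      abs_of_pos (by linarith)]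
    ring

def withTrueCount (ι : Type*) [Fintype ι] [DecidableEq ι] (k : ℕ) : Finset (ι → Bool) :=
  {σ | #{p | σ p = true} = k}

section TrueCount

variable {ι : Type*} [Fintype ι] [DecidableEq ι]

lemma comp_mem_withTrueCount_iff {k : ℕ} (σ : ι → Bool) (e : Equiv.Perm ι) :
    σ ∘ e ∈ withTrueCount ι k ↔ σ ∈ withTrueCount ι k := by
  simp only [withTrueCount, mem_filter, mem_univ, true_and, Function.comp_apply]
  rw [card_equiv e (t := {p | σ p = true}) (by simp)]

lemma sum_withTrueCount_comp_perm {β : Type*} [AddCommMonoid β] (k : ℕ) (e : Equiv.Perm ι)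
    (f : (ι → Bool) → β) :
    ∑ σ ∈ withTrueCount ι k, f (σ ∘ e) = ∑ σ ∈ withTrueCount ι k, f σ :=
  sum_equiv (e.symm.arrowCongr (Equiv.refl Bool))
    (fun σ => (comp_mem_withTrueCount_iff σ e).symm) (fun _ _ => rfl)

lemma sum_boolSign_of_mem_withTrueCount {k : ℕ} {σ : ι → Bool} (hσ : σ ∈ withTrueCount ι k) :
    ∑ p, boolSign (σ p) = 2 * k - Fintype.card ι := by
  simp only [withTrueCount, mem_filter, mem_univ, true_and] at hσ
  have hcard := card_filter_add_card_filter_not (s := univ) (fun p => σ p = true)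
  simp only [boolSign, sum_ite, sum_const, nsmul_eq_mul, card_univ] at hcard ⊢
  rw [hσ] at hcard ⊢
  rw [← hcard]
  push_cast
  ring

end TrueCount

section PartialSum

variable {n : ℕ}

noncomputable def partialSum (j : ℕ) (σ : Fin n → Bool) : ℝ :=
  ∑ p ∈ univ.filter (fun p : Fin n => (p : ℕ) < j), boolSign (σ p)

lemma partialSum_eq_intCast (j : ℕ) (σ : Fin n → Bool) :
    partialSum j σ = ((∑ p ∈ univ.filter (fun p : Fin n => (p : ℕ) < j),
      if σ p then (1 : ℤ) else -1 : ℤ) : ℝ) := by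
  simp only [partialSum, boolSign]
  push_cast
  rfl

lemma partialSum_eq_zero_or_one_le_abs (j : ℕ) (σ : Fin n → Bool) :
    partialSum j σ = 0 ∨ 1 ≤ |partialSum j σ| := by
  obtain ⟨z, hz⟩ : ∃ z : ℤ, partialSum j σ = z := ⟨_, partialSum_eq_intCast j σ⟩
  rcases eq_or_ne z 0 with rfl | hz0
  · exact .inl (by simpa using hz)
  · exact .inr (by rw [hz]; exact_mod_cast Int.one_le_abs hz0)

lemma partialSum_succ {j : ℕ} (hj : j < n) (σ : Fin n → Bool) :
    partialSum (j + 1) σ = partialSum j σ + boolSign (σ ⟨j, hj⟩) := by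
  have hfilter : univ.filter (fun p : Fin n => (p : ℕ) < j + 1)
      = insert ⟨j, hj⟩ (univ.filter (fun p : Fin n => (p : ℕ) < j)) := by
    ext p
    simp only [mem_filter, mem_univ, true_and, mem_insert, Fin.ext_iff]
    omega
  rw [partialSum, hfilter, sum_insert (by simp), partialSum, add_comm]

lemma partialSum_comp_swap {j : ℕ} (hj : j < n) (σ : Fin n → Bool) {q : Fin n} (hq : j ≤ q) :
    partialSum (j + 1) (σ ∘ Equiv.swap ⟨j, hj⟩ q) = partialSum j σ + boolSign (σ q) := by
  have hprefix : partialSum j (σ ∘ Equiv.swap ⟨j, hj⟩ q) = partialSum j σ := by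
    refine sum_congr rfl fun p hp => ?_
    have hp : (p : ℕ) < j := (mem_filter.mp hp).2
    rw [Function.comp_apply, Equiv.swap_apply_of_ne_of_ne]
    · exact fun h => by simp [h] at hp
    · exact fun h => by rw [h] at hp; omega
  rw [partialSum_succ hj, hprefix, Function.comp_apply, Equiv.swap_apply_left]

lemma partialSum_add_sum_boolSign_tail (j : ℕ) (σ : Fin n → Bool) :
    partialSum j σ + ∑ q ∈ univ.filter (fun q : Fin n => j ≤ q), boolSign (σ q)
      = ∑ q, boolSign (σ q) := by
  simp only [partialSum, ← not_lt]
  exact sum_filter_add_sum_filter_not _ _ _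

lemma card_filter_le_val {j : ℕ} (hj : j ≤ n) : #{q : Fin n | j ≤ q} = n - j := by
  have h := card_filter_add_card_filter_not (s := (univ : Finset (Fin n))) (fun q => (q : ℕ) < j)
  simp only [Fin.card_filter_val_lt, card_univ, Fintype.card_fin, not_lt] at h
  omega

lemma sum_abs_partialSum_add_boolSign_tail (hn : Even n) {j : ℕ} (hj : j ≤ n) {σ : Fin n → Bool}
    (hσ : σ ∈ withTrueCount (Fin n) (n / 2)) :
    ∑ q ∈ univ.filter (fun q : Fin n => j ≤ q), |partialSum j σ + boolSign (σ q)|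
      = ((n : ℝ) - j - 1) * |partialSum j σ| + if partialSum j σ = 0 then (n : ℝ) - j else 0 := by
  have htotal : ∑ q, boolSign (σ q) = 0 := by
    rw [sum_boolSign_of_mem_withTrueCount hσ, Fintype.card_fin, ← Nat.cast_two,
      ← Nat.cast_mul, Nat.mul_div_cancel' hn.two_dvd, sub_self]
  have hcard : (#{q : Fin n | j ≤ q} : ℝ) = n - j := by
    rw [card_filter_le_val hj, Nat.cast_sub hj]
  rw [sum_abs_add_of_sum_eq_neg _ _ (fun q _ => abs_boolSign (σ q))
    (partialSum_eq_zero_or_one_le_abs j σ)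
    (by linarith [partialSum_add_sum_boolSign_tail j σ]), hcard]

theorem sub_mul_sum_abs_partialSum_succ (hn : Even n) {j : ℕ} (hj : j < n) :
    ((n : ℝ) - j) * ∑ σ ∈ withTrueCount (Fin n) (n / 2), |partialSum (j + 1) σ|
      = ((n : ℝ) - j - 1) * ∑ σ ∈ withTrueCount (Fin n) (n / 2), |partialSum j σ|
        + ((n : ℝ) - j) * #{σ ∈ withTrueCount (Fin n) (n / 2) | partialSum j σ = 0} := by
  set S := withTrueCount (Fin n) (n / 2)
  have hswap (q : Fin n) (hq : j ≤ q) :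
      ∑ σ ∈ S, |partialSum j σ + boolSign (σ q)| = ∑ σ ∈ S, |partialSum (j + 1) σ| :=
    calc ∑ σ ∈ S, |partialSum j σ + boolSign (σ q)|
        = ∑ σ ∈ S, |partialSum (j + 1) (σ ∘ Equiv.swap ⟨j, hj⟩ q)| :=
          sum_congr rfl fun σ _ => by rw [partialSum_comp_swap hj σ hq]
      _ = ∑ σ ∈ S, |partialSum (j + 1) σ| :=
          sum_withTrueCount_comp_perm _ _ (fun σ => |partialSum (j + 1) σ|)
  calc ((n : ℝ) - j) * ∑ σ ∈ S, |partialSum (j + 1) σ|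
      = ∑ q ∈ univ.filter (fun q : Fin n => j ≤ q),
          ∑ σ ∈ S, |partialSum j σ + boolSign (σ q)| := by
        rw [sum_congr rfl fun q hq => hswap q (mem_filter.mp hq).2, sum_const,
          card_filter_le_val hj.le, nsmul_eq_mul, Nat.cast_sub hj.le]
    _ = ∑ σ ∈ S, (((n : ℝ) - j - 1) * |partialSum j σ|
          + if partialSum j σ = 0 then (n : ℝ) - j else 0) := by
        rw [sum_comm]
        exact sum_congr rfl fun σ hσ => sum_abs_partialSum_add_boolSign_tail hn hj.le hσ
    _ = _ := by
        rw [sum_add_distrib, ← mul_sum, ← sum_filter, sum_const, nsmul_eq_mul, mul_comm (#_ : ℝ)]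

end PartialSum

theorem stmt_4_general (n : ℕ) (hn : Even n) (i : ℕ) (hi1 : 1 ≤ i) (hi : i ≤ n) :
    let S : Finset (Fin n → Bool) :=
      univ.filter (fun σ => (univ.filter (fun p => σ p = true)).card = n / 2)
    let s : ℕ → (Fin n → Bool) → ℝ := fun j σ =>
      ∑ p ∈ univ.filter (fun p : Fin n => (p : ℕ) < j), (if σ p then (1 : ℝ) else -1)
    (∑ σ ∈ S, |s i σ|) / (S.card : ℝ)
      = ((∑ σ ∈ S, |s (i - 1) σ|) / (S.card : ℝ)) * (1 - 1 / ((n : ℝ) - i + 1))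
        + ((S.filter (fun σ => s (i - 1) σ = 0)).card : ℝ) / (S.card : ℝ) := by
  intro S s
  obtain ⟨j, rfl⟩ := Nat.exists_eq_add_of_le' hi1
  change (∑ σ ∈ withTrueCount (Fin n) (n / 2), |partialSum (j + 1) σ|) / _
      = ((∑ σ ∈ withTrueCount (Fin n) (n / 2), |partialSum j σ|) / _) * _
        + (#{σ ∈ withTrueCount (Fin n) (n / 2) | partialSum j σ = 0} : ℝ) / _
  have key := sub_mul_sum_abs_partialSum_succ hn hi
  have hm : (n : ℝ) - j ≠ 0 := by
    have : (j : ℝ) + 1 ≤ n := by exact_mod_cast hi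
    linarith
  rw [Nat.cast_add_one, sub_add_eq_sub_sub, sub_add_cancel, ← mul_div_right_comm, ← add_div]
  congr 1
  field_simp
  linear_combination key

/-- E[|s_i|] = E[|s_{i−1}|]·(1 − 1/(n−i+1)) + P(s_{i−1} = 0). -/
theorem stmt_4 (n : ℕ) (hn : Even n) (hn0 : 0 < n) (i : ℕ) (hi1 : 1 ≤ i) (hi : i ≤ n) :
    let S : Finset (Fin n → Bool) :=
      univ.filter (fun σ => (univ.filter (fun p => σ p = true)).card = n / 2)
    let s : ℕ → (Fin n → Bool) → ℝ := fun j σ =>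
      ∑ p ∈ univ.filter (fun p : Fin n => (p : ℕ) < j), (if σ p then (1 : ℝ) else -1)
    (∑ σ ∈ S, |s i σ|) / (S.card : ℝ)
      = ((∑ σ ∈ S, |s (i - 1) σ|) / (S.card : ℝ)) * (1 - 1 / ((n : ℝ) - i + 1))
        + ((S.filter (fun σ => s (i - 1) σ = 0)).card : ℝ) / (S.card : ℝ) :=
  stmt_4_general n hn i hi1 hi
end

section
/- Suppose x, g ∈ ℝ^d, x* ∈ ℝ^d, F: ℝ^d → ℝ is μ-strongly convex with L-Lipschitz gradient (L ≥ μ > 0), n ∈ ℕ, α > 0, and R ∈ ℝ^d. If x⁺ = x − α(n·∇F(x) + R), then ‖x⁺ − x*‖² ≤ (1 − nαμ)·‖x − x*‖² − nα(1/L − 2nα)·‖∇F(x)‖² + 2α²‖R‖² − 2α⟨x − x*, R⟩, where x* is the minimizer of F (so ∇F(x*) = 0). -/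
/-!
Strong convexity between `x` and the minimizer `x*` bounds `⟪∇F x, x - x*⟫` below by
`μ/2 ‖x - x*‖² + (F x - F x*)`, and the descent lemma applied to one gradient step of length `1/L`
gives `F x - F x* ≥ ‖∇F x‖² / (2L)`. Expanding `‖x⁺ - x*‖²` and bounding
`‖nα ∇F x + αR‖² ≤ 2 (nα)² ‖∇F x‖² + 2α² ‖R‖²` leaves exactly the claimed inequality.
-/

open RealInnerProductSpace

section GradientInequalities

variable {E : Type*} [NormedAddCommGroup E] [InnerProductSpace ℝ E]

theorem norm_sub_smul_add_sq_le (a g r : E) (α c : ℝ) :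
    ‖a - α • (c • g + r)‖ ^ 2 ≤ ‖a‖ ^ 2 - 2 * (c * α) * ⟪g, a⟫ + 2 * (c * α) ^ 2 * ‖g‖ ^ 2
      + 2 * α ^ 2 * ‖r‖ ^ 2 - 2 * α * ⟪a, r⟫ := by
  have hsplit : α • (c • g + r) = (c * α) • g + α • r := by rw [smul_add, smul_smul, mul_comm]
  have hsum : ‖(c * α) • g + α • r‖ ^ 2 ≤ 2 * (c * α) ^ 2 * ‖g‖ ^ 2 + 2 * α ^ 2 * ‖r‖ ^ 2 :=
    calc ‖(c * α) • g + α • r‖ ^ 2 ≤ (‖(c * α) • g‖ + ‖α • r‖) ^ 2 :=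
          pow_le_pow_left₀ (norm_nonneg _) (norm_add_le _ _) 2
      _ ≤ 2 * (‖(c * α) • g‖ ^ 2 + ‖α • r‖ ^ 2) := add_sq_le
      _ = 2 * (c * α) ^ 2 * ‖g‖ ^ 2 + 2 * α ^ 2 * ‖r‖ ^ 2 := by
        rw [norm_smul, norm_smul, mul_pow, mul_pow, Real.norm_eq_abs, Real.norm_eq_abs, sq_abs,
          sq_abs]
        ring
  rw [hsplit, norm_sub_sq_real, inner_add_right, real_inner_smul_right, real_inner_smul_right,
    real_inner_comm a g]
  linarith

variable [CompleteSpace E]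

theorem le_add_inner_gradient_add_sq_of_lipschitz {f : E → ℝ} {L : ℝ} (hf : Differentiable ℝ f)
    (hlip : ∀ x y, ‖gradient f x - gradient f y‖ ≤ L * ‖x - y‖) (x y : E) :
    f y ≤ f x + ⟪gradient f x, y - x⟫ + L / 2 * ‖y - x‖ ^ 2 := by
  set v := y - x
  set g := gradient f x
  set φ : ℝ → ℝ := fun t => f (x + t • v) - t * ⟪g, v⟫ - L / 2 * ‖v‖ ^ 2 * t ^ 2
  have hφ : ∀ t, HasDerivAt φ (⟪gradient f (x + t • v), v⟫ - ⟪g, v⟫ - L * ‖v‖ ^ 2 * t) t := by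
    intro t
    have hline : HasDerivAt (fun t : ℝ => x + t • v) v t := by
      simpa using ((hasDerivAt_id t).smul_const v).const_add x
    have hcomp := (hf (x + t • v)).hasGradientAt.hasFDerivAt.comp_hasDerivAt t hline
    simp only [InnerProductSpace.toDual_apply_apply] at hcomp
    exact ((hcomp.sub ((hasDerivAt_id t).mul_const ⟪g, v⟫)).sub
      ((hasDerivAt_pow 2 t).const_mul (L / 2 * ‖v‖ ^ 2))).congr_deriv (by simp; ring)
  have hφ' : ∀ t ∈ interior (Set.Ici (0 : ℝ)),
      ⟪gradient f (x + t • v), v⟫ - ⟪g, v⟫ - L * ‖v‖ ^ 2 * t ≤ 0 := by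
    intro t ht
    rw [interior_Ici, Set.mem_Ioi] at ht
    have hgrad : ‖gradient f (x + t • v) - g‖ ≤ L * (t * ‖v‖) := by
      simpa [norm_smul, abs_of_pos ht] using hlip (x + t • v) x
    calc ⟪gradient f (x + t • v), v⟫ - ⟪g, v⟫ - L * ‖v‖ ^ 2 * t
        = ⟪gradient f (x + t • v) - g, v⟫ - L * ‖v‖ ^ 2 * t := by rw [inner_sub_left]
      _ ≤ ‖gradient f (x + t • v) - g‖ * ‖v‖ - L * ‖v‖ ^ 2 * t := by
        gcongr; exact real_inner_le_norm _ _
      _ ≤ L * (t * ‖v‖) * ‖v‖ - L * ‖v‖ ^ 2 * t := by gcongr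
      _ = 0 := by ring
  have hanti : AntitoneOn φ (Set.Ici 0) :=
    antitoneOn_of_hasDerivWithinAt_nonpos (convex_Ici 0)
      (fun t _ => (hφ t).continuousAt.continuousWithinAt)
      (fun t _ => (hφ t).hasDerivWithinAt) hφ'
  have h10 := hanti Set.self_mem_Ici (Set.mem_Ici.mpr zero_le_one) zero_le_one
  have hxv : x + v = y := add_sub_cancel x y
  simp only [φ, one_smul, zero_smul, add_zero, hxv] at h10
  linarith

theorem sq_norm_gradient_le_of_lipschitz_of_forall_le {f : E → ℝ} {L : ℝ} (hL : 0 < L)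
    (hf : Differentiable ℝ f) (hlip : ∀ x y, ‖gradient f x - gradient f y‖ ≤ L * ‖x - y‖)
    {xs : E} (hmin : ∀ y, f xs ≤ f y) (x : E) :
    ‖gradient f x‖ ^ 2 / (2 * L) ≤ f x - f xs := by
  set g := gradient f x
  have hstep := le_add_inner_gradient_add_sq_of_lipschitz hf hlip x (x - L⁻¹ • g)
  rw [sub_sub_cancel_left, inner_neg_right, real_inner_smul_right, real_inner_self_eq_norm_sq,
    norm_neg, norm_smul, Real.norm_eq_abs, abs_of_pos (inv_pos.mpr hL)] at hstep
  rw [le_sub_comm]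
  calc f xs ≤ f (x - L⁻¹ • g) := hmin _
    _ ≤ f x + -(L⁻¹ * ‖g‖ ^ 2) + L / 2 * (L⁻¹ * ‖g‖) ^ 2 := hstep
    _ = f x - ‖g‖ ^ 2 / (2 * L) := by field_simp; ring

theorem forall_le_of_strongConvex_of_gradient_eq_zero {f : E → ℝ} {μ : ℝ} (hμ : 0 ≤ μ)
    (hsc : ∀ x y, f y ≥ f x + ⟪gradient f x, y - x⟫ + μ / 2 * ‖y - x‖ ^ 2)
    {xs : E} (hxs : gradient f xs = 0) (y : E) :
    f xs ≤ f y := by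
  have := hsc xs y
  rw [hxs, inner_zero_left, add_zero] at this
  nlinarith [sq_nonneg ‖y - xs‖]

theorem le_inner_gradient_sub_of_strongConvex {f : E → ℝ} {μ L : ℝ} (hμ : 0 ≤ μ) (hL : 0 < L)
    (hf : Differentiable ℝ f)
    (hsc : ∀ x y, f y ≥ f x + ⟪gradient f x, y - x⟫ + μ / 2 * ‖y - x‖ ^ 2)
    (hlip : ∀ x y, ‖gradient f x - gradient f y‖ ≤ L * ‖x - y‖)
    {xs : E} (hxs : gradient f xs = 0) (x : E) :
    μ / 2 * ‖x - xs‖ ^ 2 + ‖gradient f x‖ ^ 2 / (2 * L) ≤ ⟪gradient f x, x - xs⟫ := by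
  have hgap := sq_norm_gradient_le_of_lipschitz_of_forall_le hL hf hlip
    (forall_le_of_strongConvex_of_gradient_eq_zero hμ hsc hxs) x
  have hconv := hsc x xs
  rw [← neg_sub x xs, inner_neg_right, norm_neg] at hconv
  linarith

end GradientInequalities

/-- one-epoch expansion inequality. -/
theorem stmt_12 (d : ℕ) (μ L : ℝ) (hμ : 0 < μ) (hμL : μ ≤ L)
    (F : EuclideanSpace ℝ (Fin d) → ℝ) (hdiff : Differentiable ℝ F)
    (hsc : ∀ x y, F y ≥ F x + ⟪gradient F x, y - x⟫ + μ / 2 * ‖y - x‖ ^ 2)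
    (hlip : ∀ x y, ‖gradient F x - gradient F y‖ ≤ L * ‖x - y‖)
    (n : ℕ) (α : ℝ) (hα : 0 < α)
    (x xp xs R : EuclideanSpace ℝ (Fin d))
    (hmin : gradient F xs = 0)
    (hxp : xp = x - α • ((n : ℝ) • gradient F x + R)) :
    ‖xp - xs‖ ^ 2 ≤ (1 - n * α * μ) * ‖x - xs‖ ^ 2
      - n * α * (1 / L - 2 * n * α) * ‖gradient F x‖ ^ 2
      + 2 * α ^ 2 * ‖R‖ ^ 2 - 2 * α * ⟪x - xs, R⟫ := by
  have hcoercive := le_inner_gradient_sub_of_strongConvex hμ.le (hμ.trans_le hμL) hdiff hsc hlip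
    hmin x
  have hweighted := mul_le_mul_of_nonneg_left hcoercive (by positivity : (0 : ℝ) ≤ 2 * n * α)
  rw [hxp, sub_right_comm]
  calc _ ≤ _ := norm_sub_smul_add_sq_le _ _ _ _ _
    _ ≤ _ := by linear_combination hweighted
end

section
/- Let α ≤ 1/L and L ≥ 1. Consider two coupled sequences on ℝ: x_{t+1} = (1 − α·c(x_t))·x_t + d_t with c(x) = L if x < 0 and c(x) = 1 if x ≥ 0, and y_{t+1} = (1 − α)·y_t + d_t, where (d_t) is an arbitrary shared real sequence and x_0 = y_0 = 0. Then x_t ≥ y_t for all t ≥ 0. -/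
/-! Since `L ≥ 1`, the piecewise map `z ↦ (1 - α c(z)) z` dominates the linear map
`z ↦ (1 - α) z`, and the linear map is monotone because `α ≤ 1/L ≤ 1`. Adding the same
forcing `d t` to both preserves order, so by induction the `x`-orbit stays above the `y`-orbit. -/

theorem Monotone.seq_le_seq_add {β : Type*} [Preorder β] [Add β] [AddRightMono β]
    {f g : β → β} (hg : Monotone g) (hgf : ∀ z, g z ≤ f z) {d x y : ℕ → β}
    (h₀ : y 0 ≤ x 0) (hx : ∀ t, x (t + 1) = f (x t) + d t)
    (hy : ∀ t, y (t + 1) = g (y t) + d t) (t : ℕ) : y t ≤ x t := by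
  induction t with
  | zero => exact h₀
  | succ t ih =>
    rw [hx, hy]
    exact add_le_add_left ((hg ih).trans (hgf _)) _

theorem one_sub_mul_le_one_sub_mul_ite {L α : ℝ} (hL : 1 ≤ L) (hα : 0 ≤ α) (z : ℝ) :
    (1 - α) * z ≤ (1 - α * (if z < 0 then L else 1)) * z := by
  split_ifs with hz
  · nlinarith [mul_nonneg hα (sub_nonneg.2 hL)]
  · rw [mul_one]

/-- coupling domination for the piecewise-quadratic dynamics. -/
theorem stmt_15 (L α : ℝ) (hL : 1 ≤ L) (hα0 : 0 ≤ α) (hα : α ≤ 1 / L)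
    (d : ℕ → ℝ) (x y : ℕ → ℝ) (hx0 : x 0 = 0) (hy0 : y 0 = 0)
    (hx : ∀ t, x (t + 1) = (1 - α * (if x t < 0 then L else 1)) * x t + d t)
    (hy : ∀ t, y (t + 1) = (1 - α) * y t + d t) :
    ∀ t, x t ≥ y t := by
  have hα1 : α ≤ 1 := hα.trans ((div_le_one (by linarith)).2 hL)
  exact Monotone.seq_le_seq_add (monotone_mul_left_of_nonneg (sub_nonneg.2 hα1))
    (one_sub_mul_le_one_sub_mul_ite hL hα0) (hy0.trans hx0.symm).le hx hy
end
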